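/- Linearization is not monotonic in its expression argument: there exist a finite variable set 𝒱 containing a variable X, interval bounds B for the variables, and expressions e₁, e₂ such that ⟦e₁⟧(ρ) ⊆ ⟦e₂⟧(ρ) for every environment ρ within the bounds B, yet there is an environment ρ within B with ⟦⌊e₁⌋(B)⟧(ρ) ⊄ ⟦⌊e₂⌋(B)⟧(ρ). (A witness is e₁ = X/X and e₂ = [1,1] with X ranging over [1,2], for which ⌊X/X⌋(B) = [1/2,1]×X.) -/

import Mathlib

open scoped Classical

/-- Arithmetic expressions over the variables `V₁,…,Vₙ`:
`e ::= Vₖ | [a,b] | e+e | e−e | e×e | e/e`. -/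
inductive Expr (n : ℕ) where
  | var : Fin n → Expr n
  | itv : ℝ → ℝ → Expr n
  | add : Expr n → Expr n → Expr n
  | sub : Expr n → Expr n → Expr n
  | mul : Expr n → Expr n → Expr n
  | div : Expr n → Expr n → Expr n

/-- Set-valued concrete semantics of expressions. -/
def sem {n : ℕ} : Expr n → (Fin n → ℝ) → Set ℝ
  | .var X, ρ => {ρ X}
  | .itv a b, _ => Set.Icc a b
  | .add e₁ e₂, ρ => {z | ∃ x ∈ sem e₁ ρ, ∃ y ∈ sem e₂ ρ, z = x + y}
  | .sub e₁ e₂, ρ => {z | ∃ x ∈ sem e₁ ρ, ∃ y ∈ sem e₂ ρ, z = x - y}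
  | .mul e₁ e₂, ρ => {z | ∃ x ∈ sem e₁ ρ, ∃ y ∈ sem e₂ ρ, z = x * y}
  | .div e₁ e₂, ρ => {z | ∃ x ∈ sem e₁ ρ, ∃ y ∈ sem e₂ ρ, y ≠ 0 ∧ z = x / y}

/-- An interval with extended-real bounds (`[−∞,+∞]` coefficients are allowed,
so that dividing by an interval containing `0` yields the unconstrained form). -/
abbrev EItv : Type := EReal × EReal

/-- Interval addition `[a,b] +ᴵ [a',b'] = [a+a', b+b']`. -/
noncomputable def iadd (p q : EItv) : EItv := (p.1 + q.1, p.2 + q.2)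

/-- Interval subtraction `[a,b] −ᴵ [a',b'] = [a−b', b−a']`. -/
noncomputable def isub (p q : EItv) : EItv := (p.1 - q.2, p.2 - q.1)

/-- Interval multiplication
`[a,b] ×ᴵ [a',b'] = [min(aa',ab',ba',bb'), max(aa',ab',ba',bb')]`. -/
noncomputable def imul (p q : EItv) : EItv :=
  (min (min (p.1 * q.1) (p.1 * q.2)) (min (p.2 * q.1) (p.2 * q.2)),
   max (max (p.1 * q.1) (p.1 * q.2)) (max (p.2 * q.1) (p.2 * q.2)))

/-- Interval division: the whole line `[−∞,+∞]` when `0` lies in the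
denominator interval, and
`[min(a/a',a/b',b/a',b/b'), max(a/a',a/b',b/a',b/b')]` otherwise. -/
noncomputable def idiv (p q : EItv) : EItv :=
  if q.1 ≤ 0 ∧ 0 ≤ q.2 then (⊥, ⊤)
  else
    (min (min (p.1 / q.1) (p.1 / q.2)) (min (p.2 / q.1) (p.2 / q.2)),
     max (max (p.1 / q.1) (p.1 / q.2)) (max (p.2 / q.1) (p.2 / q.2)))

/-- An interval affine form `i₀ + Σₖ iₖ×Vₖ` whose constant and coefficient
intervals have extended-real bounds. -/
structure AffForm (n : ℕ) where
  const : EItv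
  coeff : Fin n → EItv

/-- Semantics of an interval affine form in the environment `ρ`:
`{ c₀ + Σₖ cₖ·ρ(Vₖ) | ∀j, cⱼ real, cⱼ within the j-th interval }`. -/
def AffForm.sem {n : ℕ} (l : AffForm n) (ρ : Fin n → ℝ) : Set ℝ :=
  {x | ∃ (c₀ : ℝ) (c : Fin n → ℝ),
        (l.const.1 ≤ (c₀ : EReal) ∧ (c₀ : EReal) ≤ l.const.2) ∧
        (∀ k, (l.coeff k).1 ≤ (c k : EReal) ∧ (c k : EReal) ≤ (l.coeff k).2) ∧
        x = c₀ + ∑ k, c k * ρ k}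

/-- `l₁ ⊞ l₂`: componentwise interval addition of affine forms. -/
noncomputable def AffForm.add {n : ℕ} (l m : AffForm n) : AffForm n :=
  ⟨iadd l.const m.const, fun k => iadd (l.coeff k) (m.coeff k)⟩

/-- `l₁ ⊟ l₂`: componentwise interval subtraction of affine forms. -/
noncomputable def AffForm.sub {n : ℕ} (l m : AffForm n) : AffForm n :=
  ⟨isub l.const m.const, fun k => isub (l.coeff k) (m.coeff k)⟩

/-- `i ⊠ l`: multiplication of every interval of `l` by the interval `i`. -/
noncomputable def AffForm.smul {n : ℕ} (i : EItv) (l : AffForm n) : AffForm n :=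
  ⟨imul i l.const, fun k => imul i (l.coeff k)⟩

/-- `l ⊘ i`: division of every interval of `l` by the interval `i`. -/
noncomputable def AffForm.div {n : ℕ} (l : AffForm n) (i : EItv) : AffForm n :=
  ⟨idiv l.const i, fun k => idiv (l.coeff k) i⟩

/-- Intervalization `ι(l)(B) = i₀ +ᴵ Σᴵₖ (iₖ ×ᴵ [loₖ,hiₖ])`: evaluation of the
affine form `l` to a single interval using interval arithmetic and the
variable bounds `B`. -/
noncomputable def AffForm.iota {n : ℕ} (l : AffForm n) (B : Fin n → ℝ × ℝ) :
    EItv :=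
  (l.const.1 + ∑ k, (imul (l.coeff k) (((B k).1 : EReal), ((B k).2 : EReal))).1,
   l.const.2 + ∑ k, (imul (l.coeff k) (((B k).1 : EReal), ((B k).2 : EReal))).2)

/-- The linearization `⌊e⌋(B)` of an expression `e` under the variable bounds
`B`, defined by structural induction: `⌊V⌋ = [1,1]×V`; `⌊[a,b]⌋ = [a,b]`;
`+`/`−` map to `⊞`/`⊟`; `⌊e₁/e₂⌋ = ⌊e₁⌋ ⊘ ι(⌊e₂⌋)(B)`; and
`⌊e₁×e₂⌋ = ι(⌊e₁⌋)(B) ⊠ ⌊e₂⌋` (the left argument is intervalized). -/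
noncomputable def lin {n : ℕ} (B : Fin n → ℝ × ℝ) : Expr n → AffForm n
  | .var X => ⟨(0, 0), fun k => if k = X then (1, 1) else (0, 0)⟩
  | .itv a b => ⟨((a : EReal), (b : EReal)), fun _ => (0, 0)⟩
  | .add e₁ e₂ => (lin B e₁).add (lin B e₂)
  | .sub e₁ e₂ => (lin B e₁).sub (lin B e₂)
  | .mul e₁ e₂ => AffForm.smul ((lin B e₁).iota B) (lin B e₂)
  | .div e₁ e₂ => (lin B e₁).div ((lin B e₂).iota B)

/-!
Linearizing `X / X` intervalizes the denominator to the bounds `[lo, hi]` of `X` and thereby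
forgets that it is the same `X` as the numerator: `⌊X/X⌋(B) = [1/hi, 1/lo] × X`, which at
`X = hi` takes the value `hi / lo > 1`, whereas `X / X` only ever evaluates to `1 ∈ ⟦[1,1]⟧`.
-/

lemma imul_zero_left (q : EItv) : imul (0, 0) q = (0, 0) := by
  simp [imul]

lemma imul_one_left (q : EItv) : imul (1, 1) q = (min q.1 q.2, max q.1 q.2) := by
  simp [imul]

lemma idiv_one_of_pos {lo hi : ℝ} (hlo : 0 < lo) (hle : lo ≤ hi) :
    idiv (1, 1) ((lo : EReal), (hi : EReal)) =
      (((hi⁻¹ : ℝ) : EReal), ((lo⁻¹ : ℝ) : EReal)) := by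
  have hinv : hi⁻¹ ≤ lo⁻¹ := inv_anti₀ hlo hle
  have hinv' : ((hi⁻¹ : ℝ) : EReal) ≤ (lo⁻¹ : ℝ) := EReal.coe_le_coe_iff.2 hinv
  simp only [idiv, EReal.coe_nonpos, hlo.not_ge, false_and, if_false, ← EReal.coe_one,
    ← EReal.coe_div, one_div, min_self, max_self, min_eq_right hinv', max_eq_left hinv']

namespace AffForm

variable {n : ℕ}

noncomputable def single (X : Fin n) (i : EItv) : AffForm n :=
  ⟨(0, 0), fun k => if k = X then i else (0, 0)⟩

lemma mul_mem_sem_single {X : Fin n} {a b c : ℝ} (hac : a ≤ c) (hcb : c ≤ b)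
    (ρ : Fin n → ℝ) :
    c * ρ X ∈ (single X ((a : EReal), (b : EReal))).sem ρ := by
  refine ⟨0, fun k => if k = X then c else 0, by simp [single], fun k => ?_, by simp⟩
  by_cases hk : k = X <;> simp [single, hk, hac, hcb]

lemma single_div {X : Fin n} (i q : EItv) (hq : ¬ (q.1 ≤ 0 ∧ 0 ≤ q.2)) :
    (single X i).div q = single X (idiv i q) := by
  have hzero : idiv (0, 0) q = (0, 0) := by simp [idiv, hq, EReal.zero_div]
  simp only [div, single, hzero, apply_ite (idiv · q)]

lemma iota_single_one (B : Fin n → ℝ × ℝ) (X : Fin n) :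
    (single X (1, 1)).iota B = imul (1, 1) ((B X).1, (B X).2) := by
  have hsum (f : EItv → EReal) (hf : f (0, 0) = 0) :
      ∑ k, f (imul ((single X (1, 1)).coeff k) ((B k).1, (B k).2))
        = f (imul (1, 1) ((B X).1, (B X).2)) := by
    refine (Finset.sum_eq_single X (fun k _ hk => ?_) (by simp)).trans ?_
    · simp only [single, if_neg hk, imul_zero_left, hf]
    · simp only [single, ↓reduceIte]
  simp only [iota, hsum Prod.fst rfl, hsum Prod.snd rfl]
  simp [single]

end AffForm

lemma lin_var {n : ℕ} (B : Fin n → ℝ × ℝ) (X : Fin n) :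
    lin B (.var X) = AffForm.single X (1, 1) := rfl

lemma lin_var_div_self {n : ℕ} (B : Fin n → ℝ × ℝ) (X : Fin n) (hlo : 0 < (B X).1)
    (hle : (B X).1 ≤ (B X).2) :
    lin B (.div (.var X) (.var X)) =
      AffForm.single X (((B X).2⁻¹ : ℝ), ((B X).1⁻¹ : ℝ)) := by
  have hiota : (lin B (.var X)).iota B = (((B X).1 : EReal), ((B X).2 : EReal)) := by
    simp [lin_var, AffForm.iota_single_one, imul_one_left, hle]
  show (lin B (.var X)).div ((lin B (.var X)).iota B) = _
  rw [hiota, lin_var, AffForm.single_div _ _ (by simp [EReal.coe_nonpos, hlo.not_ge]),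
    idiv_one_of_pos hlo hle]

lemma sem_lin_itv {n : ℕ} (B : Fin n → ℝ × ℝ) (a b : ℝ) (ρ : Fin n → ℝ) :
    (lin B (.itv a b)).sem ρ = Set.Icc a b := by
  ext x
  constructor
  · rintro ⟨c₀, c, ⟨ha, hb⟩, hc, rfl⟩
    have hc0 : ∀ k, c k = 0 := fun k => by
      have := hc k; simp only [lin] at this; exact_mod_cast le_antisymm this.2 this.1
    simp only [lin, EReal.coe_le_coe_iff] at ha hb
    simp [hc0, ha, hb]
  · intro hx
    exact ⟨x, 0, by simpa [lin] using hx, by simp [lin], by simp⟩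

lemma sem_var_div_self {n : ℕ} (X : Fin n) (ρ : Fin n → ℝ) (h : ρ X ≠ 0) :
    sem (.div (.var X) (.var X)) ρ = {1} := by
  ext z
  simp [sem, h]

/-- linearization is not monotonic in its expression argument.
There exist a number of variables `n`, a variable `X`, variable bounds `B`,
and expressions `e₁, e₂` such that `⟦e₁⟧(ρ) ⊆ ⟦e₂⟧(ρ)` for every environment
`ρ` within the bounds `B`, yet for some environment `ρ` within `B` one has
`⟦⌊e₁⌋(B)⟧(ρ) ⊄ ⟦⌊e₂⌋(B)⟧(ρ)`. (A witness is `e₁ = X/X` and `e₂ = [1,1]`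
with `X` ranging over `[1,2]`.) -/
theorem linearization_not_monotone :
    ∃ (n : ℕ) (_X : Fin n) (B : Fin n → ℝ × ℝ) (e₁ e₂ : Expr n),
      (∀ k, (B k).1 ≤ (B k).2) ∧
      (∀ ρ : Fin n → ℝ, (∀ k, (B k).1 ≤ ρ k ∧ ρ k ≤ (B k).2) →
        sem e₁ ρ ⊆ sem e₂ ρ) ∧
      (∃ ρ : Fin n → ℝ, (∀ k, (B k).1 ≤ ρ k ∧ ρ k ≤ (B k).2) ∧
        ¬ (lin B e₁).sem ρ ⊆ (lin B e₂).sem ρ) := by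
  let B : Fin 1 → ℝ × ℝ := fun _ => (1, 2)
  refine ⟨1, 0, B, .div (.var 0) (.var 0), .itv 1 1, fun _ => by norm_num,
    fun ρ hρ => ?_, fun _ => 2, fun _ => by norm_num, ?_⟩
  · rw [sem_var_div_self 0 ρ (by linarith [(hρ 0).1])]
    simp [sem]
  · rw [lin_var_div_self B 0 one_pos one_le_two, sem_lin_itv]
    have hmem : (1 : ℝ)⁻¹ * 2 ∈ (AffForm.single (0 : Fin 1)
        (((2 : ℝ)⁻¹ : EReal), ((1 : ℝ)⁻¹ : EReal))).sem (fun _ => 2) :=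
      AffForm.mul_mem_sem_single (by norm_num) le_rfl _
    exact fun h => by simpa using h hmem
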